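/- Let (V, w) be a d-regular weighted graph with d > 0, all vertices colored red; fix an integer s ≥ 2, add a disjoint blue vertex set V_B with |V_B| = |V|, fix B ⊆ V_B with |B| = s, give every pair of distinct vertices of B weight t = 2d/(s−1), keep the weights w inside V, and give all remaining pairs involving V_B weight 0; call the resulting weighted graph G'. Let 0 < μ ≤ 1/2 and let F be a fair set of vertices of G' with k := |F ∩ V| satisfying 1 ≤ k ≤ 2μs. Then the density of F satisfies D_F ≤ d/2 + d·(k−1)/(s−1) ≤ (1 + 4μ)·d/2. -/

import Mathlib

/-- `W(X)`: sum over ordered pairs of (distinct, since the diagonal weight is 0)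
vertices of `X` of the weight of the pair. -/
noncomputable def pairWeight {α : Type*} (w : α → α → ℝ) (X : Finset α) : ℝ :=
  ∑ i ∈ X, ∑ j ∈ X, w i j

/-- Density of a vertex set `X` in a weighted graph: `D_X = W(X)/|X|`. -/
noncomputable def wdensity {α : Type*} (w : α → α → ℝ) (X : Finset α) : ℝ :=
  pairWeight w X / X.card

/-!
The red part of `F` has `W ≤ k d` by `d`-regularity, and the blue part, a set of `k` vertices
meeting the clique on `B`, has `W ≤ k (k - 1) t`; with `|F| = 2k` this gives
`D_F ≤ d/2 + (k - 1) t / 2 = d/2 + d (k - 1)/(s - 1)`. The last bound is `(k - 1)/(s - 1) ≤ 2μ`,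
which follows from `k ≤ 2μs` and `2μ ≤ 1`.
-/

open Finset

section PairWeight

variable {α β : Type*}

/-- The weighted graph on `α ⊕ β` made of `w₁` on `α` and `w₂` on `β`, with no edges between. -/
def sumWeight (w₁ : α → α → ℝ) (w₂ : β → β → ℝ) : α ⊕ β → α ⊕ β → ℝ :=
  Sum.elim (fun i => Sum.elim (w₁ i) 0) (fun i => Sum.elim 0 (w₂ i))

def cliqueWeight [DecidableEq α] (B : Finset α) (t : ℝ) (i j : α) : ℝ :=
  if i ∈ B ∧ j ∈ B ∧ i ≠ j then t else 0

theorem pairWeight_sumWeight_disjSum (w₁ : α → α → ℝ) (w₂ : β → β → ℝ)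
    (X : Finset α) (Y : Finset β) :
    pairWeight (sumWeight w₁ w₂) (X.disjSum Y) = pairWeight w₁ X + pairWeight w₂ Y := by
  simp [pairWeight, sum_disjSum, sumWeight]

theorem pairWeight_le_card_mul [Fintype α] {w : α → α → ℝ} {d : ℝ}
    (hnonneg : ∀ i j, 0 ≤ w i j) (hdeg : ∀ i, ∑ j, w i j ≤ d) (X : Finset α) :
    pairWeight w X ≤ #X * d := by
  calc pairWeight w X ≤ ∑ _i ∈ X, d := sum_le_sum fun i _ =>
        (sum_le_sum_of_subset_of_nonneg (subset_univ X) fun j _ _ => hnonneg i j).trans (hdeg i)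
    _ = #X * d := by rw [sum_const, nsmul_eq_mul]

theorem pairWeight_le_mul_card_mul_card_sub_one [DecidableEq α] {w : α → α → ℝ} {t : ℝ}
    (hdiag : ∀ i, w i i = 0) (hle : ∀ i j, w i j ≤ t) (X : Finset α) :
    pairWeight w X ≤ t * #X * (#X - 1) := by
  have hrow : ∀ i ∈ X, ∑ j ∈ X, w i j ≤ (#X - 1) * t := fun i hi => by
    rw [← sum_erase X (hdiag i), ← Nat.cast_pred (card_pos.2 ⟨i, hi⟩), ← card_erase_of_mem hi]
    exact sum_le_card_nsmul _ _ _ (fun j _ => hle i j) |>.trans_eq (nsmul_eq_mul _ _)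
  calc pairWeight w X ≤ ∑ _i ∈ X, (#X - 1) * t := sum_le_sum hrow
    _ = t * #X * (#X - 1) := by rw [sum_const, nsmul_eq_mul]; ring

theorem cliqueWeight_le [DecidableEq α] (B : Finset α) {t : ℝ} (ht : 0 ≤ t) (i j : α) :
    cliqueWeight B t i j ≤ t := by
  unfold cliqueWeight; split_ifs <;> simp [ht]

theorem cliqueWeight_self [DecidableEq α] (B : Finset α) (t : ℝ) (i : α) :
    cliqueWeight B t i i = 0 := by
  simp [cliqueWeight]

theorem map_inl_union_map_inr_eq_disjSum [DecidableEq α] [DecidableEq β]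
    (X : Finset α) (Y : Finset β) :
    X.map ⟨Sum.inl, Sum.inl_injective⟩ ∪ Y.map ⟨Sum.inr, Sum.inr_injective⟩ = X.disjSum Y := by
  ext (x | x) <;> simp

end PairWeight

theorem half_add_mul_div_le {d μ k s : ℝ} (hd : 0 ≤ d) (hs : 1 < s) (hμ : μ ≤ 1 / 2)
    (hk : k ≤ 2 * μ * s) :
    d / 2 + d * (k - 1) / (s - 1) ≤ (1 + 4 * μ) * d / 2 := by
  have hratio : (k - 1) / (s - 1) ≤ 2 * μ := by
    rw [div_le_iff₀ (by linarith)]; linarith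
  have := mul_le_mul_of_nonneg_left hratio hd
  rw [mul_div_assoc]
  linarith

theorem sse_soundness_case_12
    {V : Type*} [Fintype V] [DecidableEq V]
    (w : V → V → ℝ) (d : ℝ) (hd : 0 < d)
    (hnonneg : ∀ i j, 0 ≤ w i j)
    (hreg : ∀ i, ∑ j, w i j = d)
    (s : ℕ) (hs2 : 2 ≤ s) (B : Finset V)
    (t : ℝ) (ht : t = 2 * d / (s - 1))
    -- the weights of G' on V ⊕ V (left = red original copy, right = blue copy):
    (w' : V ⊕ V → V ⊕ V → ℝ)
    (hw' : w' = fun a b =>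
      match a, b with
      | .inl i, .inl j => w i j
      | .inr i, .inr j => if i ∈ B ∧ j ∈ B ∧ i ≠ j then t else 0
      | _, _ => 0)
    -- a fair set F of vertices of G', decomposed into its red and blue parts:
    (Fred Fblue : Finset V) (hfair : Fred.card = Fblue.card)
    (F : Finset (V ⊕ V))
    (hF : F = Fred.map ⟨Sum.inl, Sum.inl_injective⟩ ∪ Fblue.map ⟨Sum.inr, Sum.inr_injective⟩)
    (k : ℕ) (hk : k = Fred.card)
    (μ : ℝ) (hμ : μ ≤ 1/2) (hk1 : 1 ≤ k) (hk2 : (k : ℝ) ≤ 2 * μ * s) :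
    wdensity w' F ≤ d / 2 + d * ((k : ℝ) - 1) / ((s : ℝ) - 1) ∧
    d / 2 + d * ((k : ℝ) - 1) / ((s : ℝ) - 1) ≤ (1 + 4 * μ) * d / 2 := by
  have hs : (1 : ℝ) < s := by exact_mod_cast hs2
  have hk0 : (0 : ℝ) < k := by exact_mod_cast hk1
  have hw'_eq : w' = sumWeight w (cliqueWeight B t) := by
    subst hw'; funext a b; rcases a with a | a <;> rcases b with b | b <;> rfl
  rw [map_inl_union_map_inr_eq_disjSum] at hF
  subst hw'_eq hF hk
  have hred := pairWeight_le_card_mul hnonneg (fun i => (hreg i).le) Fred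
  have hblue := pairWeight_le_mul_card_mul_card_sub_one (cliqueWeight_self B t)
    (cliqueWeight_le B (by rw [ht]; exact div_nonneg (by linarith) (by linarith))) Fblue
  refine ⟨?_, half_add_mul_div_le hd.le hs hμ hk2⟩
  rw [wdensity, pairWeight_sumWeight_disjSum, card_disjSum, ← hfair, Nat.cast_add,
    div_le_iff₀ (by linarith)]
  rw [← hfair] at hblue
  have hrhs : (d / 2 + d * (#Fred - 1) / (s - 1)) * (#Fred + #Fred)
      = #Fred * d + t * #Fred * (#Fred - 1) := by
    rw [ht]; field_simp; ring
  linarith
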